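/- For Rules 134, 142, 150, and 156 on a ring of size n, the parallel fixed points are exactly: 0^n and 1^n when n is odd; and 0^n, 1^n, (01)^{n/2}, and (10)^{n/2} when n is even. -/

import Mathlib

/-- Single-cell update: replace the state of cell `i` by the local rule applied
to its neighborhood on the ring `ZMod n`. -/
def eupdate (n : ℕ) (f : Bool → Bool → Bool → Bool) (x : ZMod n → Bool) (i : ZMod n) :
    ZMod n → Bool :=
  Function.update x i (f (x (i - 1)) (x i) (x (i + 1)))

/-- Synchronous (parallel) step. -/
def parStep (n : ℕ) (f : Bool → Bool → Bool → Bool) (x : ZMod n → Bool) : ZMod n → Bool :=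
  fun i => f (x (i - 1)) (x i) (x (i + 1))

/-- `x` is a fixed point of the parallel dynamics. -/
def IsFixedConfig (n : ℕ) (f : Bool → Bool → Bool → Bool) (x : ZMod n → Bool) : Prop :=
  ∀ i : ZMod n, f (x (i - 1)) (x i) (x (i + 1)) = x i

/-- One full sequential step under the sequential update mode `μ`
(a permutation of the cells): update cells one at a time in the order
`μ 0, μ 1, …, μ (n-1)`. -/
def seqStep (n : ℕ) (f : Bool → Bool → Bool → Bool) (μ : Fin n ≃ ZMod n)
    (x : ZMod n → Bool) : ZMod n → Bool :=
  (List.finRange n).foldl (fun y k => eupdate n f y (μ k)) x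

/-- One full sequential step under the descending order `(n-1, n-2, …, 0)`. -/
def seqStepDesc (n : ℕ) (f : Bool → Bool → Bool → Bool) (x : ZMod n → Bool) : ZMod n → Bool :=
  ((List.range n).reverse).foldl (fun y k => eupdate n f y (k : ZMod n)) x

/-- One full sequential step under the ascending order `(0, 1, …, n-1)`. -/
def seqStepAsc (n : ℕ) (f : Bool → Bool → Bool → Bool) (x : ZMod n → Bool) : ZMod n → Bool :=
  (List.range n).foldl (fun y k => eupdate n f y (k : ZMod n)) x

def rule134 : Bool → Bool → Bool → Bool
  | true, true, true => true
  | true, true, false => false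
  | true, false, true => false
  | true, false, false => false
  | false, true, true => false
  | false, true, false => true
  | false, false, true => true
  | false, false, false => false

def rule142 : Bool → Bool → Bool → Bool
  | true, true, true => true
  | true, true, false => false
  | true, false, true => false
  | true, false, false => false
  | false, true, true => true
  | false, true, false => true
  | false, false, true => true
  | false, false, false => false

def rule150 : Bool → Bool → Bool → Bool
  | true, true, true => true
  | true, true, false => false
  | true, false, true => false
  | true, false, false => true
  | false, true, true => false
  | false, true, false => true
  | false, false, true => true
  | false, false, false => false

def rule156 : Bool → Bool → Bool → Bool
  | true, true, true => true
  | true, true, false => false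
  | true, false, true => false
  | true, false, false => true
  | false, true, true => true
  | false, true, false => true
  | false, false, true => false
  | false, false, false => false

/-!
Each of the four rules fixes every window `a b a` and is not fixed on the window `1 1 0`; it is
also not fixed on `0 0 1` (rules 134, 142, 150) or on `1 0 0` (rule 156). Excluding `1 0 0` and
`1 1 0` means `x (i - 1) ≤ x (i + 1)`; excluding `0 0 1` and `1 1 0` means that an agreement
`x (i - 1) = x i` propagates to `x i = x (i + 1)`. Either way some quantity is monotone along a
cyclic orbit, hence constant, and this forces `x (i + 2) = x i`. Conversely a 2-periodic
configuration only shows windows `a b a`. On `ZMod n` the 2-periodic configurations are the two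
constants and, when `n` is even, the two alternating ones.
-/

open Function

theorem Function.Periodic.of_le_add {G α : Type*} [AddMonoid G] [PartialOrder α] {x : G → α}
    {a : G} (ha : IsOfFinAddOrder a) (h : ∀ j, x j ≤ x (j + a)) : Periodic x a := by
  have hle : ∀ (k : ℕ) (j : G), x j ≤ x (j + k • a) := by
    intro k
    induction k with
    | zero => simp
    | succ k ih => exact fun j => (ih j).trans <| by rw [succ_nsmul, ← add_assoc]; exact h _
  intro j
  refine le_antisymm ?_ (h j)
  obtain ⟨m, hm⟩ := Nat.exists_eq_succ_of_ne_zero ha.addOrderOf_pos.ne'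
  calc x (j + a) ≤ x (j + a + m • a) := hle m _
    _ = x j := by rw [add_assoc, ← succ_nsmul', ← Nat.succ_eq_add_one, ← hm,
      addOrderOf_nsmul_eq_zero, add_zero]

theorem ZMod.val_add_two_mod_two {n : ℕ} [NeZero n] (hn : 2 ∣ n) (i : ZMod n) :
    (i + 2).val % 2 = i.val % 2 := by
  have h2 : (2 : ZMod n).val % 2 = 0 := by rw [ZMod.val_ofNat, Nat.mod_mod_of_dvd _ hn]
  rw [ZMod.val_add, Nat.mod_mod_of_dvd _ hn, Nat.add_mod, h2, add_zero, Nat.mod_mod]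

section PeriodTwo

variable {n : ℕ} {α : Type*} {x : ZMod n → α}

theorem Function.Periodic.eq_ite_val_mod_two [NeZero n] (hx : Periodic x 2) (i : ZMod n) :
    x i = if i.val % 2 = 0 then x 0 else x 1 := by
  have hi : i = ((i.val % 2 : ℕ) : ZMod n) + (i.val / 2 : ℕ) * 2 := by
    conv_lhs => rw [← ZMod.natCast_zmod_val i, ← Nat.mod_add_div i.val 2]
    push_cast
    ring
  conv_lhs => rw [hi, hx.nat_mul]
  rcases Nat.mod_two_eq_zero_or_one i.val with h | h <;> simp [h]

theorem Function.Periodic.apply_one_eq_apply_zero_of_odd (hn : Odd n) (hx : Periodic x 2) :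
    x 1 = x 0 := by
  obtain ⟨k, rfl⟩ := hn
  rw [← hx.nat_mul k 1, ← ZMod.natCast_self (2 * k + 1)]
  push_cast
  ring_nf

end PeriodTwo

theorem ZMod.periodic_two_iff {n : ℕ} [NeZero n] (x : ZMod n → Bool) :
    Periodic x 2 ↔
      (x = (fun _ => false) ∨ x = (fun _ => true) ∨
        (Even n ∧ ((∀ i : ZMod n, x i = decide (i.val % 2 = 0)) ∨
                   (∀ i : ZMod n, x i = decide (i.val % 2 = 1))))) := by
  constructor
  · intro hx
    have hform := hx.eq_ite_val_mod_two
    have heven : x 1 ≠ x 0 → Even n := fun h =>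
      Nat.not_odd_iff_even.mp fun hodd => h (hx.apply_one_eq_apply_zero_of_odd hodd)
    cases h0 : x 0 <;> cases h1 : x 1
    · exact Or.inl <| funext fun i => by rw [hform i, h0, h1]; grind
    · refine Or.inr <| Or.inr ⟨heven (by simp [h0, h1]), Or.inr fun i => ?_⟩
      rw [hform i, h0, h1]; grind
    · refine Or.inr <| Or.inr ⟨heven (by simp [h0, h1]), Or.inl fun i => ?_⟩
      rw [hform i, h0, h1]; grind
    · exact Or.inr <| Or.inl <| funext fun i => by rw [hform i, h0, h1]; grind
  · rintro (rfl | rfl | ⟨heven, h | h⟩) i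
    · rfl
    · rfl
    · rw [h, h, ZMod.val_add_two_mod_two heven.two_dvd]
    · rw [h, h, ZMod.val_add_two_mod_two heven.two_dvd]

section Rule

variable {n : ℕ} {f : Bool → Bool → Bool → Bool} {x : ZMod n → Bool}

theorem isFixedConfig_of_periodic_two (hf : ∀ a b, f a b a = b) (hx : Periodic x 2) :
    IsFixedConfig n f x := fun i => by
  have : x (i + 1) = x (i - 1) := by rw [← hx (i - 1)]; ring_nf
  rw [this, hf]

theorem IsFixedConfig.le_add_two (h110 : f true true false = false)
    (h100 : f true false false = true) (hx : IsFixedConfig n f x) (j : ZMod n) :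
    x j ≤ x (j + 2) := by
  have hfix := hx (j + 1)
  rw [add_sub_cancel_right, add_assoc, one_add_one_eq_two] at hfix
  revert hfix
  cases x j <;> cases x (j + 1) <;> cases x (j + 2) <;> simp [h110, h100]

theorem IsFixedConfig.beq_le_beq (h110 : f true true false = false)
    (h001 : f false false true = true) (hx : IsFixedConfig n f x) (j : ZMod n) :
    (x j == x (j + 1)) ≤ (x (j + 1) == x (j + 1 + 1)) := by
  have hfix := hx (j + 1)
  rw [add_sub_cancel_right] at hfix
  revert hfix
  cases x j <;> cases x (j + 1) <;> cases x (j + 1 + 1) <;> simp [h110, h001]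

theorem IsFixedConfig.periodic_two [NeZero n] (h110 : f true true false = false)
    (h : f false false true = true ∨ f true false false = true) (hx : IsFixedConfig n f x) :
    Periodic x 2 := by
  rcases h with h001 | h100
  · have hagree : Periodic (fun j => x j == x (j + 1)) 1 :=
      Periodic.of_le_add (isOfFinAddOrder_of_finite 1) (hx.beq_le_beq h110 h001)
    intro j
    have hj : (x (j + 1) == x (j + 1 + 1)) = (x j == x (j + 1)) := hagree j
    rw [← one_add_one_eq_two, ← add_assoc]
    revert hj
    cases x j <;> cases x (j + 1) <;> cases x (j + 1 + 1) <;> decide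
  · exact Periodic.of_le_add (isOfFinAddOrder_of_finite 2) (hx.le_add_two h110 h100)

theorem isFixedConfig_iff_periodic_two [NeZero n] (hf : ∀ a b, f a b a = b)
    (h110 : f true true false = false)
    (h : f false false true = true ∨ f true false false = true) :
    IsFixedConfig n f x ↔ Periodic x 2 :=
  ⟨fun hx => hx.periodic_two h110 h, isFixedConfig_of_periodic_two hf⟩

end Rule

theorem rules_134_142_150_156_fixed_points (n : ℕ) (hn : 0 < n) (x : ZMod n → Bool) :
    (IsFixedConfig n rule134 x ↔
      (x = (fun _ => false) ∨ x = (fun _ => true) ∨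
        (Even n ∧ ((∀ i : ZMod n, x i = decide (i.val % 2 = 0)) ∨
                   (∀ i : ZMod n, x i = decide (i.val % 2 = 1)))))) ∧
    (IsFixedConfig n rule142 x ↔
      (x = (fun _ => false) ∨ x = (fun _ => true) ∨
        (Even n ∧ ((∀ i : ZMod n, x i = decide (i.val % 2 = 0)) ∨
                   (∀ i : ZMod n, x i = decide (i.val % 2 = 1)))))) ∧
    (IsFixedConfig n rule150 x ↔
      (x = (fun _ => false) ∨ x = (fun _ => true) ∨
        (Even n ∧ ((∀ i : ZMod n, x i = decide (i.val % 2 = 0)) ∨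
                   (∀ i : ZMod n, x i = decide (i.val % 2 = 1)))))) ∧
    (IsFixedConfig n rule156 x ↔
      (x = (fun _ => false) ∨ x = (fun _ => true) ∨
        (Even n ∧ ((∀ i : ZMod n, x i = decide (i.val % 2 = 0)) ∨
                   (∀ i : ZMod n, x i = decide (i.val % 2 = 1)))))) := by
  have : NeZero n := ⟨hn.ne'⟩
  rw [← ZMod.periodic_two_iff x,
    isFixedConfig_iff_periodic_two (by decide) rfl (by decide),
    isFixedConfig_iff_periodic_two (by decide) rfl (by decide),
    isFixedConfig_iff_periodic_two (by decide) rfl (by decide),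
    isFixedConfig_iff_periodic_two (by decide) rfl (by decide)]
  exact ⟨Iff.rfl, Iff.rfl, Iff.rfl, Iff.rfl⟩
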